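/- arXiv:2604.19140 — 10 statements merged into one kernel-verified Lean document; each statement's English description precedes it below -/
import Mathlib

section
/- There exist infinitely many quartic rational Diophantine quadruples; that is, the collection of sets {a,b,c,d} of four pairwise distinct nonzero rational numbers such that each of ab+1, ac+1, ad+1, bc+1, bd+1, cd+1 is a fourth power of a rational number, is infinite. -/
/-!
If `m⁴ + x⁴ = h⁴ + 1` with `h ≠ 0`, then in `{h², -1/h², (x⁴-1)/h², (m⁴-1)/h²}` the six
products increased by one are `0`, `x⁴`, `m⁴`, `(m/h)⁴`, `(x/h)⁴` and `(mx/h)⁴`. Dividing Euler's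
parametric solution of `A⁴ + B⁴ = C⁴ + D⁴` by `D` gives a family of such points whose
`h = C/D` is unbounded, so the resulting quadruples cannot all lie in a finite set.
-/

/-- A quartic rational Diophantine quadruple: a set of four pairwise distinct
nonzero rational numbers such that the product of any two of them increased by 1
is a fourth power in ℚ. -/
def IsQuarticDiophQuadruple (s : Finset ℚ) : Prop :=
  s.card = 4 ∧ (0 : ℚ) ∉ s ∧
    ∀ x ∈ s, ∀ y ∈ s, x ≠ y → ∃ q : ℚ, x * y + 1 = q ^ 4

theorem Set.infinite_of_forall_exists_lt_mem {α : Type*} [Preorder α] [IsDirectedOrder α]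
    [Nonempty α] {S : Set (Finset α)} (h : ∀ b : α, ∃ s ∈ S, ∃ x ∈ s, b < x) :
    S.Infinite := by
  intro hS
  obtain ⟨b, hb⟩ := (hS.biUnion fun s _ => s.finite_toSet).bddAbove
  obtain ⟨s, hs, x, hx, hbx⟩ := h b
  exact hbx.not_ge (hb (Set.mem_biUnion hs hx))

theorem isQuarticDiophQuadruple_of_pairwise {a b c d : ℚ}
    (hab : a ≠ b) (hac : a ≠ c) (had : a ≠ d) (hbc : b ≠ c) (hbd : b ≠ d) (hcd : c ≠ d)
    (ha : a ≠ 0) (hb : b ≠ 0) (hc : c ≠ 0) (hd : d ≠ 0)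
    (pab : ∃ q : ℚ, a * b + 1 = q ^ 4) (pac : ∃ q : ℚ, a * c + 1 = q ^ 4)
    (pad : ∃ q : ℚ, a * d + 1 = q ^ 4) (pbc : ∃ q : ℚ, b * c + 1 = q ^ 4)
    (pbd : ∃ q : ℚ, b * d + 1 = q ^ 4) (pcd : ∃ q : ℚ, c * d + 1 = q ^ 4) :
    IsQuarticDiophQuadruple {a, b, c, d} := by
  refine ⟨Finset.card_eq_four.2 ⟨a, b, c, d, hab, hac, had, hbc, hbd, hcd, rfl⟩, ?_, ?_⟩
  · simp only [Finset.mem_insert, Finset.mem_singleton, not_or]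
    exact ⟨ha.symm, hb.symm, hc.symm, hd.symm⟩
  · intro x hx y hy hxy
    simp only [Finset.mem_insert, Finset.mem_singleton] at hx hy
    rcases hx with rfl | rfl | rfl | rfl <;> rcases hy with rfl | rfl | rfl | rfl <;>
      simp_all only [ne_eq, not_true_eq_false, mul_comm]

def quadrupleOfPoint (m x h : ℚ) : Finset ℚ :=
  {h ^ 2, -1 / h ^ 2, (x ^ 4 - 1) / h ^ 2, (m ^ 4 - 1) / h ^ 2}

theorem isQuarticDiophQuadruple_quadrupleOfPoint {m x h : ℚ}
    (hm : m ≠ 0) (hx : x ≠ 0) (hh : h ≠ 0) (hm1 : m ^ 4 ≠ 1) (hx1 : x ^ 4 ≠ 1)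
    (hmx : x ^ 4 ≠ m ^ 4) (hE : m ^ 4 + x ^ 4 = h ^ 4 + 1) :
    IsQuarticDiophQuadruple (quadrupleOfPoint m x h) := by
  have h2pos : 0 < h ^ 2 := by positivity
  have h2 := h2pos.ne'
  have hm4 : m ^ 4 ≠ 0 := pow_ne_zero 4 hm
  have hx4 : x ^ 4 ≠ 0 := pow_ne_zero 4 hx
  apply isQuarticDiophQuadruple_of_pairwise
  · exact ((div_neg_of_neg_of_pos (by norm_num) h2pos).trans h2pos).ne'
  · rw [Ne, eq_div_iff h2]
    exact fun e => hm4 (by linear_combination hE + e)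
  · rw [Ne, eq_div_iff h2]
    exact fun e => hx4 (by linear_combination hE + e)
  · rw [Ne, div_left_inj' h2]
    exact fun e => hx4 (by linear_combination -e)
  · rw [Ne, div_left_inj' h2]
    exact fun e => hm4 (by linear_combination -e)
  · rw [Ne, div_left_inj' h2, sub_left_inj]
    exact hmx
  · exact h2
  · exact div_ne_zero (by norm_num) h2
  · exact div_ne_zero (sub_ne_zero.2 hx1) h2
  · exact div_ne_zero (sub_ne_zero.2 hm1) h2
  · exact ⟨0, by field_simp; ring⟩
  · exact ⟨x, by field_simp; ring⟩
  · exact ⟨m, by field_simp; ring⟩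
  · exact ⟨m / h, by field_simp; linear_combination -hE⟩
  · exact ⟨x / h, by field_simp; linear_combination -hE⟩
  · exact ⟨m * x / h, by field_simp; linear_combination -hE⟩

/-- Euler's parametric solution of `A⁴ + B⁴ = C⁴ + D⁴`. -/
def eulerA (n : ℚ) : ℚ := n ^ 7 + n ^ 5 - 2 * n ^ 3 + 3 * n ^ 2 + n
def eulerB (n : ℚ) : ℚ := n ^ 6 - 3 * n ^ 5 - 2 * n ^ 4 + n ^ 2 + 1
def eulerC (n : ℚ) : ℚ := n ^ 7 + n ^ 5 - 2 * n ^ 3 - 3 * n ^ 2 + n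
def eulerD (n : ℚ) : ℚ := n ^ 6 + 3 * n ^ 5 - 2 * n ^ 4 + n ^ 2 + 1

theorem eulerA_pow_four_add_eulerB_pow_four (n : ℚ) :
    eulerA n ^ 4 + eulerB n ^ 4 = eulerC n ^ 4 + eulerD n ^ 4 := by
  unfold eulerA eulerB eulerC eulerD
  ring

section Shifted

/-! At `n = k + 4` each of the differences below is a polynomial in `k` with positive
coefficients. -/

variable (k : ℕ)

theorem eulerB_pos : 0 < eulerB (k + 4) := by
  unfold eulerB; ring_nf; positivity

theorem eulerB_lt_eulerD : eulerB (k + 4) < eulerD (k + 4) := by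
  unfold eulerB eulerD; rw [← sub_pos]; ring_nf; positivity

theorem eulerD_lt_eulerA : eulerD (k + 4) < eulerA (k + 4) := by
  unfold eulerA eulerD; rw [← sub_pos]; ring_nf; positivity

theorem mul_eulerD_lt_eulerC : (k + 1) * eulerD (k + 4) < eulerC (k + 4) := by
  unfold eulerC eulerD; rw [← sub_pos]; ring_nf; positivity

theorem eulerD_pos : 0 < eulerD (k + 4) :=
  (eulerB_pos k).trans (eulerB_lt_eulerD k)

def eulerQuadruple : Finset ℚ :=
  quadrupleOfPoint (eulerA (k + 4) / eulerD (k + 4)) (eulerB (k + 4) / eulerD (k + 4))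
    (eulerC (k + 4) / eulerD (k + 4))

theorem isQuarticDiophQuadruple_eulerQuadruple :
    IsQuarticDiophQuadruple (eulerQuadruple k) := by
  have hD := eulerD_pos k
  have hx0 : 0 < eulerB (k + 4) / eulerD (k + 4) := div_pos (eulerB_pos k) hD
  have hx1 : eulerB (k + 4) / eulerD (k + 4) < 1 := (div_lt_one hD).2 (eulerB_lt_eulerD k)
  have hm1 : 1 < eulerA (k + 4) / eulerD (k + 4) := (one_lt_div hD).2 (eulerD_lt_eulerA k)
  have hx4 := pow_lt_one₀ hx0.le hx1 (n := 4) (by norm_num)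
  have hm4 := one_lt_pow₀ hm1 (n := 4) (by norm_num)
  have hC : 0 < eulerC (k + 4) := (mul_pos (by positivity) hD).trans (mul_eulerD_lt_eulerC k)
  refine isQuarticDiophQuadruple_quadrupleOfPoint (by positivity) hx0.ne'
    (div_pos hC hD).ne' hm4.ne' hx4.ne (hx4.trans hm4).ne ?_
  field_simp
  exact eulerA_pow_four_add_eulerB_pow_four _

theorem lt_sq_eulerC_div_eulerD : (k + 1 : ℚ) < (eulerC (k + 4) / eulerD (k + 4)) ^ 2 := by
  have hD := eulerD_pos k
  have hh : (k + 1 : ℚ) < eulerC (k + 4) / eulerD (k + 4) :=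
    (lt_div_iff₀ hD).2 (mul_eulerD_lt_eulerC k)
  have h1 : 1 < eulerC (k + 4) / eulerD (k + 4) := by
    linarith [(Nat.cast_nonneg k : (0 : ℚ) ≤ k)]
  exact hh.trans (lt_self_pow₀ h1 one_lt_two)

end Shifted

theorem infinitely_many_quartic_diophantine_quadruples :
    {s : Finset ℚ | IsQuarticDiophQuadruple s}.Infinite := by
  refine Set.infinite_of_forall_exists_lt_mem fun b => ⟨eulerQuadruple ⌈b⌉₊,
    isQuarticDiophQuadruple_eulerQuadruple _, _, Finset.mem_insert_self _ _, ?_⟩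
  calc b ≤ ⌈b⌉₊ := Nat.le_ceil b
    _ < ⌈b⌉₊ + 1 := lt_add_one _
    _ < _ := lt_sq_eulerC_div_eulerD _
end

section
/- Let X, Y, Z, W be rational numbers with X^4 + Y^4 = Z^4 + W^4 and ZW ≠ 0. Define a = (X^4 − W^4)/(Z^2 W^2), b = −W^2/Z^2, c = (Y^4 − W^4)/(Z^2 W^2), d = Z^2/W^2. Then ab + 1 = (Y/Z)^4, ac + 1 = (XY/(ZW))^4, ad + 1 = (X/W)^4, bc + 1 = (X/Z)^4, bd + 1 = 0, and cd + 1 = (Y/W)^4. -/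
/-!
Each identity is a one-line computation once the denominators are cleared. Those pairing `d`
with another entry hold for any `X, Y`; the others are exactly the Euler relation, e.g.
`ab + 1 = (Z⁴ - X⁴ + W⁴) / Z⁴ = Y⁴ / Z⁴`.
-/

section EulerQuadruple

variable {K : Type*} [Field K] {X Y Z W : K}

theorem neg_div_sq_mul_div_sq_add_one (hZ : Z ≠ 0) (hW : W ≠ 0) :
    -(W ^ 2 / Z ^ 2) * (Z ^ 2 / W ^ 2) + 1 = 0 := by
  field_simp
  ring

theorem fourth_sub_div_mul_div_sq_add_one (hZ : Z ≠ 0) (hW : W ≠ 0) :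
    (X ^ 4 - W ^ 4) / (Z ^ 2 * W ^ 2) * (Z ^ 2 / W ^ 2) + 1 = (X / W) ^ 4 := by
  field_simp
  ring

theorem fourth_sub_div_mul_neg_div_sq_add_one_of_euler (hE : X ^ 4 + Y ^ 4 = Z ^ 4 + W ^ 4)
    (hZ : Z ≠ 0) (hW : W ≠ 0) :
    (X ^ 4 - W ^ 4) / (Z ^ 2 * W ^ 2) * -(W ^ 2 / Z ^ 2) + 1 = (Y / Z) ^ 4 := by
  field_simp
  linear_combination -hE

theorem fourth_sub_div_mul_fourth_sub_div_add_one_of_euler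
    (hE : X ^ 4 + Y ^ 4 = Z ^ 4 + W ^ 4) (hZ : Z ≠ 0) (hW : W ≠ 0) :
    (X ^ 4 - W ^ 4) / (Z ^ 2 * W ^ 2) * ((Y ^ 4 - W ^ 4) / (Z ^ 2 * W ^ 2)) + 1 =
      (X * Y / (Z * W)) ^ 4 := by
  field_simp
  linear_combination -W ^ 4 * hE

end EulerQuadruple

theorem euler_to_quadruple_identities
    (X Y Z W : ℚ) (hE : X ^ 4 + Y ^ 4 = Z ^ 4 + W ^ 4) (hZW : Z * W ≠ 0)
    (a b c d : ℚ)
    (ha : a = (X ^ 4 - W ^ 4) / (Z ^ 2 * W ^ 2))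
    (hb : b = -(W ^ 2 / Z ^ 2))
    (hc : c = (Y ^ 4 - W ^ 4) / (Z ^ 2 * W ^ 2))
    (hd : d = Z ^ 2 / W ^ 2) :
    a * b + 1 = (Y / Z) ^ 4 ∧
    a * c + 1 = (X * Y / (Z * W)) ^ 4 ∧
    a * d + 1 = (X / W) ^ 4 ∧
    b * c + 1 = (X / Z) ^ 4 ∧
    b * d + 1 = 0 ∧
    c * d + 1 = (Y / W) ^ 4 := by
  obtain ⟨hZ, hW⟩ := mul_ne_zero_iff.mp hZW
  have hE' : Y ^ 4 + X ^ 4 = Z ^ 4 + W ^ 4 := by rw [add_comm, hE]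
  subst ha hb hc hd
  refine ⟨fourth_sub_div_mul_neg_div_sq_add_one_of_euler hE hZ hW,
    fourth_sub_div_mul_fourth_sub_div_add_one_of_euler hE hZ hW,
    fourth_sub_div_mul_div_sq_add_one hZ hW, ?_,
    neg_div_sq_mul_div_sq_add_one hZ hW,
    fourth_sub_div_mul_div_sq_add_one hZ hW⟩
  rw [mul_comm]
  exact fourth_sub_div_mul_neg_div_sq_add_one_of_euler hE' hZ hW
end

section
/- Let X, Y, Z, W be rational numbers with X^4 + Y^4 = Z^4 + W^4, ZW ≠ 0, and XYZW·(X^2 − Y^2)·(X^2 − W^2)·(Y^2 − W^2) ≠ 0. Then the numbers a = (X^4 − W^4)/(Z^2 W^2), b = −W^2/Z^2, c = (Y^4 − W^4)/(Z^2 W^2), d = Z^2/W^2 form a quartic rational Diophantine quadruple: they are pairwise distinct, nonzero, and each of ab+1, ac+1, ad+1, bc+1, bd+1, cd+1 is a fourth power of a rational number. -/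
/-!
All four numbers, and `0`, are values of the injective affine map `f t = (t - W⁴) / (Z²W²)`:
`a, b, c, d, 0` are its values at `X⁴, 0, Y⁴, Z⁴ + W⁴ = X⁴ + Y⁴, W⁴`, and the nondegeneracy
hypothesis makes these five arguments pairwise distinct. For two values of the map,
`f s * f t + 1` collapses to `(Z⁴ + W⁴ - s) / Z⁴` when `t = 0`, to `s / W⁴` when `t = Z⁴ + W⁴`, and to
`s t / (ZW)⁴` when `s + t = Z⁴ + W⁴`; by the Euler relation each of these is a fourth power.
-/

section EulerAffine

variable {K : Type*} [Field K] {Z W : K}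

def eulerAffine (Z W t : K) : K := (t - W ^ 4) / (Z ^ 2 * W ^ 2)

theorem eulerAffine_injective (hZ : Z ≠ 0) (hW : W ≠ 0) : Function.Injective (eulerAffine Z W) :=
  fun _ _ h => sub_left_injective ((div_left_inj' (by positivity)).1 h)

theorem eulerAffine_zero (hW : W ≠ 0) : eulerAffine Z W 0 = -(W ^ 2 / Z ^ 2) := by
  unfold eulerAffine; field_simp; ring

variable (hZ : Z ≠ 0) (hW : W ≠ 0)
include hZ hW

theorem eulerAffine_eq_zero_iff {t : K} : eulerAffine Z W t = 0 ↔ t = W ^ 4 := by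
  rw [eulerAffine, div_eq_zero_iff, sub_eq_zero, or_iff_left (by positivity)]

theorem eulerAffine_add : eulerAffine Z W (Z ^ 4 + W ^ 4) = Z ^ 2 / W ^ 2 := by
  unfold eulerAffine; field_simp; ring

theorem eulerAffine_mul_eulerAffine_zero_add_one (s : K) :
    eulerAffine Z W s * eulerAffine Z W 0 + 1 = (Z ^ 4 + W ^ 4 - s) / Z ^ 4 := by
  unfold eulerAffine; field_simp; ring

theorem eulerAffine_mul_eulerAffine_add_add_one (s : K) :
    eulerAffine Z W s * eulerAffine Z W (Z ^ 4 + W ^ 4) + 1 = s / W ^ 4 := by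
  unfold eulerAffine; field_simp; ring

theorem eulerAffine_mul_eulerAffine_add_one {s t : K} (hst : s + t = Z ^ 4 + W ^ 4) :
    eulerAffine Z W s * eulerAffine Z W t + 1 = s * t / (Z * W) ^ 4 := by
  unfold eulerAffine; field_simp; linear_combination (-W ^ 4) * hst

end EulerAffine

theorem pow_four_ne_pow_four {R : Type*} [Ring R] [LinearOrder R] [IsStrictOrderedRing R] {x y : R}
    (h : x ^ 2 ≠ y ^ 2) : x ^ 4 ≠ y ^ 4 := by
  rw [show 4 = 2 * 2 from rfl, pow_mul, pow_mul]
  exact fun h' => h ((sq_eq_sq₀ (sq_nonneg x) (sq_nonneg y)).1 h')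

theorem euler_point_gives_quartic_quadruple_general
    (X Y Z W : ℚ) (hE : X ^ 4 + Y ^ 4 = Z ^ 4 + W ^ 4)
    (hnd : X * Y * Z * W * (X ^ 2 - Y ^ 2) * (X ^ 2 - W ^ 2) * (Y ^ 2 - W ^ 2) ≠ 0)
    (a b c d : ℚ)
    (ha : a = (X ^ 4 - W ^ 4) / (Z ^ 2 * W ^ 2))
    (hb : b = -(W ^ 2 / Z ^ 2))
    (hc : c = (Y ^ 4 - W ^ 4) / (Z ^ 2 * W ^ 2))
    (hd : d = Z ^ 2 / W ^ 2) :
    (a ≠ b ∧ a ≠ c ∧ a ≠ d ∧ b ≠ c ∧ b ≠ d ∧ c ≠ d) ∧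
    (a ≠ 0 ∧ b ≠ 0 ∧ c ≠ 0 ∧ d ≠ 0) ∧
    (∃ q : ℚ, a * b + 1 = q ^ 4) ∧
    (∃ q : ℚ, a * c + 1 = q ^ 4) ∧
    (∃ q : ℚ, a * d + 1 = q ^ 4) ∧
    (∃ q : ℚ, b * c + 1 = q ^ 4) ∧
    (∃ q : ℚ, b * d + 1 = q ^ 4) ∧
    (∃ q : ℚ, c * d + 1 = q ^ 4) := by
  simp only [mul_ne_zero_iff, sub_ne_zero] at hnd
  obtain ⟨⟨⟨⟨⟨⟨hX, hY⟩, hZ⟩, hW⟩, hXY⟩, hXW⟩, hYW⟩ := hnd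
  obtain rfl : a = eulerAffine Z W (X ^ 4) := ha
  obtain rfl : b = eulerAffine Z W 0 := hb.trans (eulerAffine_zero hW).symm
  obtain rfl : c = eulerAffine Z W (Y ^ 4) := hc
  obtain rfl : d = eulerAffine Z W (X ^ 4 + Y ^ 4) := by rw [hd, hE, eulerAffine_add hZ hW]
  have hf := eulerAffine_injective hZ hW
  have hf0 {t : ℚ} (ht : t ≠ W ^ 4) : eulerAffine Z W t ≠ 0 :=
    mt (eulerAffine_eq_zero_iff hZ hW).1 ht
  have hX4 : X ^ 4 ≠ 0 := pow_ne_zero 4 hX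
  have hY4 : Y ^ 4 ≠ 0 := pow_ne_zero 4 hY
  have hsum : 0 < X ^ 4 + Y ^ 4 := by positivity
  refine ⟨⟨hf.ne hX4, hf.ne (pow_four_ne_pow_four hXY), hf.ne (left_ne_add.2 hY4), hf.ne hY4.symm,
      hf.ne hsum.ne, hf.ne (right_ne_add.2 hX4)⟩,
    ⟨hf0 (pow_four_ne_pow_four hXW), hf0 (pow_ne_zero 4 hW).symm, hf0 (pow_four_ne_pow_four hYW),
      hf0 (hE ▸ add_ne_right.2 (pow_ne_zero 4 hZ))⟩,
    ⟨Y / Z, ?_⟩, ⟨X * Y / (Z * W), ?_⟩, ⟨X / W, ?_⟩, ⟨X / Z, ?_⟩, ⟨0, ?_⟩, ⟨Y / W, ?_⟩⟩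
  · rw [eulerAffine_mul_eulerAffine_zero_add_one hZ hW, ← hE, add_sub_cancel_left, div_pow]
  · rw [eulerAffine_mul_eulerAffine_add_one hZ hW hE, div_pow, mul_pow, mul_pow]
  · rw [hE, eulerAffine_mul_eulerAffine_add_add_one hZ hW, div_pow]
  · rw [mul_comm, eulerAffine_mul_eulerAffine_zero_add_one hZ hW, ← hE, add_sub_cancel_right,
      div_pow]
  · rw [hE, eulerAffine_mul_eulerAffine_add_add_one hZ hW, zero_div, zero_pow four_ne_zero]
  · rw [hE, eulerAffine_mul_eulerAffine_add_add_one hZ hW, div_pow]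

theorem euler_point_gives_quartic_quadruple
    (X Y Z W : ℚ) (hE : X ^ 4 + Y ^ 4 = Z ^ 4 + W ^ 4) (hZW : Z * W ≠ 0)
    (hnd : X * Y * Z * W * (X ^ 2 - Y ^ 2) * (X ^ 2 - W ^ 2) * (Y ^ 2 - W ^ 2) ≠ 0)
    (a b c d : ℚ)
    (ha : a = (X ^ 4 - W ^ 4) / (Z ^ 2 * W ^ 2))
    (hb : b = -(W ^ 2 / Z ^ 2))
    (hc : c = (Y ^ 4 - W ^ 4) / (Z ^ 2 * W ^ 2))
    (hd : d = Z ^ 2 / W ^ 2) :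
    (a ≠ b ∧ a ≠ c ∧ a ≠ d ∧ b ≠ c ∧ b ≠ d ∧ c ≠ d) ∧
    (a ≠ 0 ∧ b ≠ 0 ∧ c ≠ 0 ∧ d ≠ 0) ∧
    (∃ q : ℚ, a * b + 1 = q ^ 4) ∧
    (∃ q : ℚ, a * c + 1 = q ^ 4) ∧
    (∃ q : ℚ, a * d + 1 = q ^ 4) ∧
    (∃ q : ℚ, b * c + 1 = q ^ 4) ∧
    (∃ q : ℚ, b * d + 1 = q ^ 4) ∧
    (∃ q : ℚ, c * d + 1 = q ^ 4) :=
  euler_point_gives_quartic_quadruple_general X Y Z W hE hnd a b c d ha hb hc hd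
end

section
/- There exist infinitely many quadruples (X, Y, Z, W) of rational numbers satisfying X^4 + Y^4 = Z^4 + W^4 together with the nondegeneracy condition XYZW·(X^2 − Y^2)·(X^2 − W^2)·(Y^2 − W^2) ≠ 0, and such that no two of them define the same projective point (X : Y : Z : W) in P^3(ℚ). -/
/-- Euler's parametrized curve on the quartic surface, with β = 1. -/
def eulerF (t : ℚ) : ℚ × ℚ × ℚ × ℚ :=
  (t^7 + t^5 - 2*t^3 + 3*t^2 + t,
   t^6 - 3*t^5 - 2*t^4 + t^2 + 1,
   t^7 + t^5 - 2*t^3 - 3*t^2 + t,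
   t^6 + 3*t^5 - 2*t^4 + t^2 + 1)

lemma euler_pow_chain {t : ℚ} (ht : 4 ≤ t) :
    4*t ≤ t^2 ∧ 4*t^2 ≤ t^3 ∧ 4*t^3 ≤ t^4 ∧ 4*t^4 ≤ t^5 ∧ 4*t^5 ≤ t^6 ∧ 4*t^6 ≤ t^7 := by
  have h0 : (0:ℚ) ≤ t := by linarith
  have h4 : (0:ℚ) ≤ t - 4 := by linarith
  refine ⟨?_, ?_, ?_, ?_, ?_, ?_⟩ <;> nlinarith [mul_nonneg h0 h4,
    mul_nonneg (mul_nonneg h0 h0) h4, mul_nonneg (mul_nonneg (mul_nonneg h0 h0) h0) h4,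
    mul_nonneg (mul_nonneg (mul_nonneg (mul_nonneg h0 h0) h0) h0) h4,
    mul_nonneg (mul_nonneg (mul_nonneg (mul_nonneg (mul_nonneg h0 h0) h0) h0) h0) h4]

lemma eulerX_pos {t : ℚ} (ht : 4 ≤ t) : 0 < t^7 + t^5 - 2*t^3 + 3*t^2 + t := by
  obtain ⟨c1, c2, c3, c4, c5, c6⟩ := euler_pow_chain ht; linarith

lemma eulerY_pos {t : ℚ} (ht : 4 ≤ t) : 0 < t^6 - 3*t^5 - 2*t^4 + t^2 + 1 := by
  obtain ⟨c1, c2, c3, c4, c5, c6⟩ := euler_pow_chain ht; linarith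

lemma eulerZ_pos {t : ℚ} (ht : 4 ≤ t) : 0 < t^7 + t^5 - 2*t^3 - 3*t^2 + t := by
  obtain ⟨c1, c2, c3, c4, c5, c6⟩ := euler_pow_chain ht; linarith

lemma eulerW_pos {t : ℚ} (ht : 4 ≤ t) : 0 < t^6 + 3*t^5 - 2*t^4 + t^2 + 1 := by
  obtain ⟨c1, c2, c3, c4, c5, c6⟩ := euler_pow_chain ht; linarith

lemma eulerXmY_pos {t : ℚ} (ht : 4 ≤ t) :
    0 < (t^7 + t^5 - 2*t^3 + 3*t^2 + t) - (t^6 - 3*t^5 - 2*t^4 + t^2 + 1) := by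
  obtain ⟨c1, c2, c3, c4, c5, c6⟩ := euler_pow_chain ht; linarith

lemma eulerXmW_pos {t : ℚ} (ht : 4 ≤ t) :
    0 < (t^7 + t^5 - 2*t^3 + 3*t^2 + t) - (t^6 + 3*t^5 - 2*t^4 + t^2 + 1) := by
  obtain ⟨c1, c2, c3, c4, c5, c6⟩ := euler_pow_chain ht; linarith

theorem infinitely_many_nondegenerate_euler_points :
    ∃ S : Set (ℚ × ℚ × ℚ × ℚ), S.Infinite ∧
      (∀ p ∈ S, p.1 ^ 4 + p.2.1 ^ 4 = p.2.2.1 ^ 4 + p.2.2.2 ^ 4 ∧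
        p.1 * p.2.1 * p.2.2.1 * p.2.2.2 *
          (p.1 ^ 2 - p.2.1 ^ 2) * (p.1 ^ 2 - p.2.2.2 ^ 2) *
          (p.2.1 ^ 2 - p.2.2.2 ^ 2) ≠ 0) ∧
      (∀ p ∈ S, ∀ q ∈ S, p ≠ q →
        ¬ ∃ lam : ℚ, lam ≠ 0 ∧
          q.1 = lam * p.1 ∧ q.2.1 = lam * p.2.1 ∧
          q.2.2.1 = lam * p.2.2.1 ∧ q.2.2.2 = lam * p.2.2.2) := by
  refine ⟨Set.range (fun n : ℕ => eulerF ((n : ℚ) + 4)), ?_, ?_, ?_⟩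
  · -- infinite
    apply Set.infinite_range_of_injective
    intro m n h
    have hm : (0:ℚ) ≤ (m:ℚ) := Nat.cast_nonneg m
    have hn : (0:ℚ) ≤ (n:ℚ) := Nat.cast_nonneg n
    simp only [eulerF, Prod.mk.injEq] at h
    have hXZ : ((m:ℚ)+4)^2 = ((n:ℚ)+4)^2 := by
      linear_combination (h.1 - h.2.2.1) / 6
    have hfac : ((m:ℚ) - (n:ℚ)) * ((m:ℚ) + (n:ℚ) + 8) = 0 := by
      linear_combination hXZ
    rcases mul_eq_zero.mp hfac with h' | h'
    · exact_mod_cast (show (m:ℚ) = n by linarith)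
    · exact absurd h' (show ((m:ℚ) + (n:ℚ) + 8) ≠ 0 by positivity)
  · -- equation and nondegeneracy
    rintro p ⟨n, rfl⟩
    simp only [eulerF]
    have hn : (0:ℚ) ≤ (n:ℚ) := Nat.cast_nonneg n
    set t : ℚ := (n : ℚ) + 4 with htdef
    have ht : 4 ≤ t := by rw [htdef]; linarith
    refine ⟨by ring, ?_⟩
    have hX := eulerX_pos ht
    have hY := eulerY_pos ht
    have hZ := eulerZ_pos ht
    have hW := eulerW_pos ht
    have hXY := eulerXmY_pos ht
    have hXW := eulerXmW_pos ht
    set x : ℚ := t^7 + t^5 - 2*t^3 + 3*t^2 + t with hx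
    set y : ℚ := t^6 - 3*t^5 - 2*t^4 + t^2 + 1 with hy
    set z : ℚ := t^7 + t^5 - 2*t^3 - 3*t^2 + t with hz
    set w : ℚ := t^6 + 3*t^5 - 2*t^4 + t^2 + 1 with hw
    have h0t : (0:ℚ) < t := by linarith
    have hYW : 0 < w - y := by
      rw [hw, hy]; nlinarith [pow_pos h0t 5]
    have e1 : 0 < x^2 - y^2 := by nlinarith [mul_pos hXY (show 0 < x + y by linarith)]
    have e2 : 0 < x^2 - w^2 := by nlinarith [mul_pos hXW (show 0 < x + w by linarith)]
    have e3 : y^2 - w^2 < 0 := by nlinarith [mul_pos hYW (show 0 < w + y by linarith)]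
    exact ne_of_lt (mul_neg_of_pos_of_neg
      (mul_pos (mul_pos (mul_pos (mul_pos (mul_pos hX hY) hZ) hW) e1) e2) e3)
  · -- projective distinctness
    rintro p ⟨m, rfl⟩ q ⟨n, rfl⟩ hpq ⟨lam, hlam, h1, h2, h3, h4⟩
    simp only [eulerF] at h1 h2 h3 h4
    have hm : (0:ℚ) ≤ (m:ℚ) := Nat.cast_nonneg m
    have hn : (0:ℚ) ≤ (n:ℚ) := Nat.cast_nonneg n
    set s : ℚ := (m : ℚ) + 4 with hsdef
    set t : ℚ := (n : ℚ) + 4 with htdef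
    have hs0 : (0:ℚ) < s := by rw [hsdef]; linarith
    have ht0 : (0:ℚ) < t := by rw [htdef]; linarith
    have k2 : t^2 = lam * s^2 := by linear_combination (h1 - h3) / 6
    have k5 : t^5 = lam * s^5 := by linear_combination (h4 - h2) / 6
    have hfac : s^2 * t^2 * (t^3 - s^3) = 0 := by
      linear_combination s^2 * k5 - s^5 * k2
    have hst2 : (0:ℚ) < s^2 * t^2 := by positivity
    have hcube : t^3 - s^3 = 0 := by
      rcases mul_eq_zero.mp hfac with h' | h'
      · exact absurd h' hst2.ne'
      · exact h'
    have hquad : (0:ℚ) < t^2 + t*s + s^2 :=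
      add_pos (add_pos (pow_pos ht0 2) (mul_pos ht0 hs0)) (pow_pos hs0 2)
    have hfac2 : (t - s) * (t^2 + t*s + s^2) = 0 := by linear_combination hcube
    have hts : t = s := by
      rcases mul_eq_zero.mp hfac2 with h' | h'
      · linarith
      · exact absurd h' hquad.ne'
    apply hpq
    have hmn : (m:ℚ) = (n:ℚ) := by rw [hsdef, htdef] at hts; linarith
    have : m = n := by exact_mod_cast hmn
    rw [this]
end

section
/- For every rational number t such that t·(t−1)·(t+1)·(t^2+1)·(t^2−t−1)·(t^2+t−1)·(t^4−t^2+1)·(t^4+3t^2+1)·(t^6−2t^4+t^2+1)·(t^6+t^4−2t^2+1)·(t^6+4t^4−6t^3+4t^2+1)·(t^6+4t^4+6t^3+4t^2+1)·(t^6+t^4−2t^2+3t+1)·(t^6−3t^5−2t^4+t^2+1)·(t^6+3t^5−2t^4+t^2+1)·(t^6+t^4−2t^2−3t+1) ≠ 0, the point X(t) = t^6+3t^5−2t^4+t^2+1, Y(t) = t(t^6+t^4−2t^2−3t+1), Z(t) = t^6−3t^5−2t^4+t^2+1, W(t) = t(t^6+t^4−2t^2+3t+1) satisfies X(t)^4 +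 Y(t)^4 = Z(t)^4 + W(t)^4, Z(t)W(t) ≠ 0, and X(t)Y(t)Z(t)W(t)·(X(t)^2−Y(t)^2)·(X(t)^2−W(t)^2)·(Y(t)^2−W(t)^2) ≠ 0. -/
/-- The polynomial `Y(t)^2 - X(t)^2` has no rational roots: its numerator polynomial is
primitive with leading coefficient 1 and constant coefficient -1, so the only candidate
rational roots are ±1, and neither is a root. -/
lemma euler_aux_poly_ne_zero (t : ℚ) :
    t ^ 14 + t ^ 12 - 6 * t ^ 11 - 8 * t ^ 10 + 6 * t ^ 9 - 8 * t ^ 8 - 12 * t ^ 7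
      + 8 * t ^ 6 + 6 * t ^ 5 + 8 * t ^ 4 - 6 * t ^ 3 - t ^ 2 - 1 ≠ 0 := by
  intro h
  set p : ℤ := t.num with hp
  set q : ℤ := (t.den : ℤ) with hq
  have hqpos : 0 < q := Int.natCast_pos.mpr t.pos
  have hqQ : (q : ℚ) ≠ 0 := by
    exact_mod_cast (ne_of_gt (show (0:ℚ) < (q:ℚ) by exact_mod_cast hqpos))
  have hnum : (p : ℚ) = t * (q : ℚ) := by
    rw [hp, hq]
    push_cast
    rw [Rat.mul_den_eq_num]
  have keyQ : (p : ℚ) ^ 14 + (p:ℚ) ^ 12 * (q:ℚ) ^ 2 - 6 * (p:ℚ) ^ 11 * (q:ℚ) ^ 3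
      - 8 * (p:ℚ) ^ 10 * (q:ℚ) ^ 4 + 6 * (p:ℚ) ^ 9 * (q:ℚ) ^ 5 - 8 * (p:ℚ) ^ 8 * (q:ℚ) ^ 6
      - 12 * (p:ℚ) ^ 7 * (q:ℚ) ^ 7 + 8 * (p:ℚ) ^ 6 * (q:ℚ) ^ 8 + 6 * (p:ℚ) ^ 5 * (q:ℚ) ^ 9
      + 8 * (p:ℚ) ^ 4 * (q:ℚ) ^ 10 - 6 * (p:ℚ) ^ 3 * (q:ℚ) ^ 11 - (p:ℚ) ^ 2 * (q:ℚ) ^ 12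
      - (q:ℚ) ^ 14 = 0 := by
    rw [hnum]
    linear_combination (q : ℚ) ^ 14 * h
  have key : p ^ 14 + p ^ 12 * q ^ 2 - 6 * p ^ 11 * q ^ 3 - 8 * p ^ 10 * q ^ 4
      + 6 * p ^ 9 * q ^ 5 - 8 * p ^ 8 * q ^ 6 - 12 * p ^ 7 * q ^ 7 + 8 * p ^ 6 * q ^ 8
      + 6 * p ^ 5 * q ^ 9 + 8 * p ^ 4 * q ^ 10 - 6 * p ^ 3 * q ^ 11 - p ^ 2 * q ^ 12
      - q ^ 14 = 0 := by exact_mod_cast keyQ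
  have hcop : IsCoprime p q := by
    rw [Int.isCoprime_iff_gcd_eq_one]
    exact_mod_cast t.reduced
  -- q divides p^14, so q = 1
  have hqdvd : q ∣ p ^ 14 := by
    refine ⟨-p ^ 12 * q + 6 * p ^ 11 * q ^ 2 + 8 * p ^ 10 * q ^ 3 - 6 * p ^ 9 * q ^ 4
      + 8 * p ^ 8 * q ^ 5 + 12 * p ^ 7 * q ^ 6 - 8 * p ^ 6 * q ^ 7 - 6 * p ^ 5 * q ^ 8
      - 8 * p ^ 4 * q ^ 9 + 6 * p ^ 3 * q ^ 10 + p ^ 2 * q ^ 11 + q ^ 13, ?_⟩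
    linear_combination key
  have hqunit : IsUnit q := (IsCoprime.pow_left hcop : IsCoprime (p ^ 14) q).isUnit_of_dvd' hqdvd dvd_rfl
  have hq1 : q = 1 := by
    rcases Int.isUnit_iff.mp hqunit with h1 | h1
    · exact h1
    · omega
  -- p divides q^14, so p = ±1
  have hpdvd : p ∣ q ^ 14 := by
    refine ⟨p ^ 13 + p ^ 11 * q ^ 2 - 6 * p ^ 10 * q ^ 3 - 8 * p ^ 9 * q ^ 4
      + 6 * p ^ 8 * q ^ 5 - 8 * p ^ 7 * q ^ 6 - 12 * p ^ 6 * q ^ 7 + 8 * p ^ 5 * q ^ 8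
      + 6 * p ^ 4 * q ^ 9 + 8 * p ^ 3 * q ^ 10 - 6 * p ^ 2 * q ^ 11 - p * q ^ 12, ?_⟩
    linear_combination -key
  have hpunit : IsUnit p := (IsCoprime.pow_right hcop : IsCoprime p (q ^ 14)).isUnit_of_dvd' dvd_rfl hpdvd
  have ht1 : t = 1 ∨ t = -1 := by
    have hteq : t = (p : ℚ) / (q : ℚ) := (Rat.num_div_den t).symm
    rcases Int.isUnit_iff.mp hpunit with h1 | h1
    · left; rw [hteq, h1, hq1]; norm_num
    · right; rw [hteq, h1, hq1]; norm_num
  rcases ht1 with h1 | h1 <;> rw [h1] at h <;> norm_num at h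

theorem euler_specialization_nondegenerate (t : ℚ)
    (ht : t * (t - 1) * (t + 1) * (t ^ 2 + 1) * (t ^ 2 - t - 1) * (t ^ 2 + t - 1) *
      (t ^ 4 - t ^ 2 + 1) * (t ^ 4 + 3 * t ^ 2 + 1) *
      (t ^ 6 - 2 * t ^ 4 + t ^ 2 + 1) * (t ^ 6 + t ^ 4 - 2 * t ^ 2 + 1) *
      (t ^ 6 + 4 * t ^ 4 - 6 * t ^ 3 + 4 * t ^ 2 + 1) *
      (t ^ 6 + 4 * t ^ 4 + 6 * t ^ 3 + 4 * t ^ 2 + 1) *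
      (t ^ 6 + t ^ 4 - 2 * t ^ 2 + 3 * t + 1) *
      (t ^ 6 - 3 * t ^ 5 - 2 * t ^ 4 + t ^ 2 + 1) *
      (t ^ 6 + 3 * t ^ 5 - 2 * t ^ 4 + t ^ 2 + 1) *
      (t ^ 6 + t ^ 4 - 2 * t ^ 2 - 3 * t + 1) ≠ 0)
    (X Y Z W : ℚ)
    (hX : X = t ^ 6 + 3 * t ^ 5 - 2 * t ^ 4 + t ^ 2 + 1)
    (hY : Y = t * (t ^ 6 + t ^ 4 - 2 * t ^ 2 - 3 * t + 1))
    (hZ : Z = t ^ 6 - 3 * t ^ 5 - 2 * t ^ 4 + t ^ 2 + 1)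
    (hW : W = t * (t ^ 6 + t ^ 4 - 2 * t ^ 2 + 3 * t + 1)) :
    X ^ 4 + Y ^ 4 = Z ^ 4 + W ^ 4 ∧ Z * W ≠ 0 ∧
    X * Y * Z * W * (X ^ 2 - Y ^ 2) * (X ^ 2 - W ^ 2) * (Y ^ 2 - W ^ 2) ≠ 0 := by
  simp only [mul_ne_zero_iff] at ht
  obtain ⟨⟨⟨⟨⟨⟨⟨⟨⟨⟨⟨⟨⟨⟨⟨h1, h2⟩, h3⟩, h4⟩, h5⟩, h6⟩, h7⟩, h8⟩, h9⟩, h10⟩,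
    h11⟩, h12⟩, h13⟩, h14⟩, h15⟩, h16⟩ := ht
  have hXne : X ≠ 0 := by rw [hX]; exact h15
  have hYne : Y ≠ 0 := by rw [hY]; exact mul_ne_zero h1 h16
  have hZne : Z ≠ 0 := by rw [hZ]; exact h14
  have hWne : W ≠ 0 := by rw [hW]; exact mul_ne_zero h1 h13
  refine ⟨by rw [hX, hY, hZ, hW]; ring, mul_ne_zero hZne hWne, ?_⟩
  have hXY : X ^ 2 - Y ^ 2 = -(t ^ 14 + t ^ 12 - 6 * t ^ 11 - 8 * t ^ 10 + 6 * t ^ 9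
      - 8 * t ^ 8 - 12 * t ^ 7 + 8 * t ^ 6 + 6 * t ^ 5 + 8 * t ^ 4 - 6 * t ^ 3
      - t ^ 2 - 1) := by rw [hX, hY]; ring
  have hXYne : X ^ 2 - Y ^ 2 ≠ 0 := by
    rw [hXY]; exact neg_ne_zero.mpr (euler_aux_poly_ne_zero t)
  have hXW : X ^ 2 - W ^ 2 = -((t - 1) * (t + 1) * (t ^ 2 + 1) * (t ^ 2 - t - 1) *
      (t ^ 2 + t - 1) * (t ^ 6 + 4 * t ^ 4 - 6 * t ^ 3 + 4 * t ^ 2 + 1)) := by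
    rw [hX, hW]; ring
  have hXWne : X ^ 2 - W ^ 2 ≠ 0 := by
    rw [hXW]
    exact neg_ne_zero.mpr (mul_ne_zero (mul_ne_zero (mul_ne_zero (mul_ne_zero
      (mul_ne_zero h2 h3) h4) h5) h6) h11)
  have hYW : Y ^ 2 - W ^ 2 = -(12 * t ^ 3 * (t ^ 6 + t ^ 4 - 2 * t ^ 2 + 1)) := by
    rw [hY, hW]; ring
  have hYWne : Y ^ 2 - W ^ 2 ≠ 0 := by
    rw [hYW]
    exact neg_ne_zero.mpr (mul_ne_zero (mul_ne_zero (by norm_num) (pow_ne_zero 3 h1)) h10)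
  exact mul_ne_zero (mul_ne_zero (mul_ne_zero (mul_ne_zero (mul_ne_zero
    (mul_ne_zero hXne hYne) hZne) hWne) hXYne) hXWne) hYWne
end

section
/- Let k = 2m be an even integer with m ≥ 1, and let X, Y, Z, W be rational numbers with X^k + Y^k = Z^k + W^k and ZW ≠ 0. Define a = (X^k − W^k)/(Z^m W^m), b = −(W/Z)^m, c = (Y^k − W^k)/(Z^m W^m), d = (Z/W)^m. Then ab + 1 = (Y/Z)^k, ac + 1 = (XY/(ZW))^k, ad + 1 = (X/W)^k, bc + 1 = (X/Z)^k, bd + 1 = 0, and cd + 1 = (Y/W)^k. -/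
/-! For even `k = 2m` the surface is the image of the quadric `x² + y² = z² + w²` under
`(X, Y, Z, W) ↦ (X^m, Y^m, Z^m, W^m)`, so all six identities are instances of the
corresponding identities on the quadric, which are field identities modulo its equation. -/

theorem quadric_add_one_identities {K : Type*} [Field K] {x y z w a b c d : K}
    (h : x ^ 2 + y ^ 2 = z ^ 2 + w ^ 2) (hz : z ≠ 0) (hw : w ≠ 0)
    (ha : a = (x ^ 2 - w ^ 2) / (z * w)) (hb : b = -(w / z))
    (hc : c = (y ^ 2 - w ^ 2) / (z * w)) (hd : d = z / w) :
    a * b + 1 = (y / z) ^ 2 ∧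
    a * c + 1 = (x * y / (z * w)) ^ 2 ∧
    a * d + 1 = (x / w) ^ 2 ∧
    b * c + 1 = (x / z) ^ 2 ∧
    b * d + 1 = 0 ∧
    c * d + 1 = (y / w) ^ 2 := by
  subst ha hb hc hd
  refine ⟨?_, ?_, ?_, ?_, ?_, ?_⟩ <;> field_simp
  · linear_combination -h
  · linear_combination (-w ^ 2) * h
  · ring
  · linear_combination -h
  · ring
  · ring

theorem fermat_euler_even_identities_general
    (m : ℕ) (k : ℕ) (hk : k = 2 * m)
    (X Y Z W : ℚ) (hE : X ^ k + Y ^ k = Z ^ k + W ^ k) (hZW : Z * W ≠ 0)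
    (a b c d : ℚ)
    (ha : a = (X ^ k - W ^ k) / (Z ^ m * W ^ m))
    (hb : b = -(W / Z) ^ m)
    (hc : c = (Y ^ k - W ^ k) / (Z ^ m * W ^ m))
    (hd : d = (Z / W) ^ m) :
    a * b + 1 = (Y / Z) ^ k ∧
    a * c + 1 = (X * Y / (Z * W)) ^ k ∧
    a * d + 1 = (X / W) ^ k ∧
    b * c + 1 = (X / Z) ^ k ∧
    b * d + 1 = 0 ∧
    c * d + 1 = (Y / W) ^ k := by
  obtain ⟨hZ, hW⟩ := mul_ne_zero_iff.mp hZW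
  subst hk
  rw [div_pow] at hb hd
  simp only [pow_mul'] at hE ha hc ⊢
  simpa only [div_pow, mul_pow] using
    quadric_add_one_identities hE (pow_ne_zero m hZ) (pow_ne_zero m hW) ha hb hc hd

theorem fermat_euler_even_identities
    (m : ℕ) (hm : 1 ≤ m) (k : ℕ) (hk : k = 2 * m)
    (X Y Z W : ℚ) (hE : X ^ k + Y ^ k = Z ^ k + W ^ k) (hZW : Z * W ≠ 0)
    (a b c d : ℚ)
    (ha : a = (X ^ k - W ^ k) / (Z ^ m * W ^ m))
    (hb : b = -(W / Z) ^ m)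
    (hc : c = (Y ^ k - W ^ k) / (Z ^ m * W ^ m))
    (hd : d = (Z / W) ^ m) :
    a * b + 1 = (Y / Z) ^ k ∧
    a * c + 1 = (X * Y / (Z * W)) ^ k ∧
    a * d + 1 = (X / W) ^ k ∧
    b * c + 1 = (X / Z) ^ k ∧
    b * d + 1 = 0 ∧
    c * d + 1 = (Y / W) ^ k :=
  fermat_euler_even_identities_general m k hk X Y Z W hE hZW a b c d ha hb hc hd
end

section
/- Let k = 2m be an even integer with m ≥ 1, and let X, Y, Z, W be rational numbers with X^k + Y^k = Z^k + W^k, ZW ≠ 0, and XYZW·(X^k − Y^k)·(X^k − W^k)·(Y^k − W^k) ≠ 0. Then the numbers a = (X^k − W^k)/(Z^m W^m), b = −(W/Z)^m, c = (Y^k − W^k)/(Z^m W^m), d = (Z/W)^m are pairwise distinct and nonzero, and each of ab+1, ac+1, ad+1, bc+1, bd+1, cd+1 is a kth power of a rational number; hence they form a kth power rational Diophantine quadruple. -/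
/-! Put x = X^m, y = Y^m, z = Z^m, w = W^m, so that x² + y² = z² + w². Using this relation, each
product of two of a, b, c, d plus one is the square of a quotient of monomials in x, y, z, w:
for instance ab + 1 = (y/z)² and ac + 1 = (xy/(zw))², while bd = -1. A square of such a quotient
is the k-th power of the corresponding quotient of X, Y, Z, W. -/

namespace FermatEuler

variable {K : Type*} [Field K] {x y z w : K}

theorem mul_add_one_eq_sq (hE : x ^ 2 + y ^ 2 = z ^ 2 + w ^ 2) (hz : z ≠ 0) (hw : w ≠ 0) :
    (x ^ 2 - w ^ 2) / (z * w) * -(w / z) + 1 = (y / z) ^ 2 ∧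
    (x ^ 2 - w ^ 2) / (z * w) * ((y ^ 2 - w ^ 2) / (z * w)) + 1 = (x * y / (z * w)) ^ 2 ∧
    (x ^ 2 - w ^ 2) / (z * w) * (z / w) + 1 = (x / w) ^ 2 ∧
    -(w / z) * ((y ^ 2 - w ^ 2) / (z * w)) + 1 = (x / z) ^ 2 ∧
    -(w / z) * (z / w) + 1 = 0 ∧
    (y ^ 2 - w ^ 2) / (z * w) * (z / w) + 1 = (y / w) ^ 2 := by
  refine ⟨?_, ?_, ?_, ?_, ?_, ?_⟩ <;> field_simp
  · linear_combination -hE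
  · linear_combination -w ^ 2 * hE
  · ring
  · linear_combination -hE
  · ring
  · ring

theorem ne_zero (hz : z ≠ 0) (hw : w ≠ 0) (hxw : x ^ 2 ≠ w ^ 2) (hyw : y ^ 2 ≠ w ^ 2) :
    (x ^ 2 - w ^ 2) / (z * w) ≠ 0 ∧ -(w / z) ≠ 0 ∧ (y ^ 2 - w ^ 2) / (z * w) ≠ 0 ∧ z / w ≠ 0 := by
  have hzw := mul_ne_zero hz hw
  exact ⟨div_ne_zero (sub_ne_zero.2 hxw) hzw, neg_ne_zero.2 (div_ne_zero hw hz),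
    div_ne_zero (sub_ne_zero.2 hyw) hzw, div_ne_zero hz hw⟩

theorem pairwise_ne (hE : x ^ 2 + y ^ 2 = z ^ 2 + w ^ 2) (hx : x ≠ 0) (hy : y ≠ 0) (hz : z ≠ 0)
    (hw : w ≠ 0) (hxy : x ^ 2 ≠ y ^ 2) (hzw : z ^ 2 + w ^ 2 ≠ 0) :
    (x ^ 2 - w ^ 2) / (z * w) ≠ -(w / z) ∧
    (x ^ 2 - w ^ 2) / (z * w) ≠ (y ^ 2 - w ^ 2) / (z * w) ∧
    (x ^ 2 - w ^ 2) / (z * w) ≠ z / w ∧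
    -(w / z) ≠ (y ^ 2 - w ^ 2) / (z * w) ∧
    -(w / z) ≠ z / w ∧
    (y ^ 2 - w ^ 2) / (z * w) ≠ z / w := by
  have hx2 := pow_ne_zero 2 hx
  have hy2 := pow_ne_zero 2 hy
  refine ⟨?_, ?_, ?_, ?_, ?_, ?_⟩ <;> intro h <;> field_simp at h
  · exact hx2 (by linear_combination h)
  · exact hxy (by linear_combination h)
  · exact hy2 (by linear_combination hE - h)
  · exact hy2 (by linear_combination -h)
  · exact hzw (by linear_combination -h)
  · exact hx2 (by linear_combination hE - h)

end FermatEuler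

theorem fermat_euler_even_quadruple_general
    (m : ℕ) (hm : 1 ≤ m) (k : ℕ) (hk : k = 2 * m)
    (X Y Z W : ℚ) (hE : X ^ k + Y ^ k = Z ^ k + W ^ k)
    (hnd : X * Y * Z * W * (X ^ k - Y ^ k) * (X ^ k - W ^ k) * (Y ^ k - W ^ k) ≠ 0)
    (a b c d : ℚ)
    (ha : a = (X ^ k - W ^ k) / (Z ^ m * W ^ m))
    (hb : b = -(W / Z) ^ m)
    (hc : c = (Y ^ k - W ^ k) / (Z ^ m * W ^ m))
    (hd : d = (Z / W) ^ m) :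
    (a ≠ b ∧ a ≠ c ∧ a ≠ d ∧ b ≠ c ∧ b ≠ d ∧ c ≠ d) ∧
    (a ≠ 0 ∧ b ≠ 0 ∧ c ≠ 0 ∧ d ≠ 0) ∧
    (∃ q : ℚ, a * b + 1 = q ^ k) ∧
    (∃ q : ℚ, a * c + 1 = q ^ k) ∧
    (∃ q : ℚ, a * d + 1 = q ^ k) ∧
    (∃ q : ℚ, b * c + 1 = q ^ k) ∧
    (∃ q : ℚ, b * d + 1 = q ^ k) ∧
    (∃ q : ℚ, c * d + 1 = q ^ k) := by
  simp only [mul_ne_zero_iff, sub_ne_zero] at hnd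
  obtain ⟨⟨⟨⟨⟨⟨hX, hY⟩, hZ⟩, hW⟩, hXY⟩, hXW⟩, hYW⟩ := hnd
  have hpow (t : ℚ) : t ^ k = (t ^ m) ^ 2 := by rw [hk, pow_mul']
  simp only [hpow] at hE hXY hXW hYW ha hc ⊢
  rw [div_pow] at hb hd
  subst ha hb hc hd
  have hZm := pow_ne_zero m hZ
  have hWm := pow_ne_zero m hW
  have hsum : (Z ^ m) ^ 2 + (W ^ m) ^ 2 ≠ 0 := by positivity
  obtain ⟨hab, hac, had, hbc, hbd, hcd⟩ := FermatEuler.mul_add_one_eq_sq hE hZm hWm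
  refine ⟨FermatEuler.pairwise_ne hE (pow_ne_zero m hX) (pow_ne_zero m hY) hZm hWm hXY hsum,
    FermatEuler.ne_zero hZm hWm hXW hYW, ⟨Y / Z, by rwa [div_pow]⟩,
    ⟨X * Y / (Z * W), by rwa [div_pow, mul_pow, mul_pow]⟩, ⟨X / W, by rwa [div_pow]⟩,
    ⟨X / Z, by rwa [div_pow]⟩, ⟨0, by rw [hbd, zero_pow (by omega), zero_pow two_ne_zero]⟩,
    ⟨Y / W, by rwa [div_pow]⟩⟩

theorem fermat_euler_even_quadruple
    (m : ℕ) (hm : 1 ≤ m) (k : ℕ) (hk : k = 2 * m)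
    (X Y Z W : ℚ) (hE : X ^ k + Y ^ k = Z ^ k + W ^ k) (hZW : Z * W ≠ 0)
    (hnd : X * Y * Z * W * (X ^ k - Y ^ k) * (X ^ k - W ^ k) * (Y ^ k - W ^ k) ≠ 0)
    (a b c d : ℚ)
    (ha : a = (X ^ k - W ^ k) / (Z ^ m * W ^ m))
    (hb : b = -(W / Z) ^ m)
    (hc : c = (Y ^ k - W ^ k) / (Z ^ m * W ^ m))
    (hd : d = (Z / W) ^ m) :
    (a ≠ b ∧ a ≠ c ∧ a ≠ d ∧ b ≠ c ∧ b ≠ d ∧ c ≠ d) ∧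
    (a ≠ 0 ∧ b ≠ 0 ∧ c ≠ 0 ∧ d ≠ 0) ∧
    (∃ q : ℚ, a * b + 1 = q ^ k) ∧
    (∃ q : ℚ, a * c + 1 = q ^ k) ∧
    (∃ q : ℚ, a * d + 1 = q ^ k) ∧
    (∃ q : ℚ, b * c + 1 = q ^ k) ∧
    (∃ q : ℚ, b * d + 1 = q ^ k) ∧
    (∃ q : ℚ, c * d + 1 = q ^ k) :=
  fermat_euler_even_quadruple_general m hm k hk X Y Z W hE hnd a b c d ha hb hc hd
end

section
/- Let k be an odd integer with k ≥ 3, and let X, Y, Z, W be rational numbers with X^k + Y^k = Z^k + W^k, ZW ≠ 0, and suppose W/Z = λ^2 for some nonzero rational λ. Define a = (X^k − W^k)/(λ^k Z^k), b = −λ^k, c = (Y^k − W^k)/(λ^k Z^k), d = λ^{−k}. Then ab + 1 = (Y/Z)^k, ac + 1 = (XY/(ZW))^k, ad + 1 = (X/W)^k, bc + 1 = (X/Z)^k, bd + 1 = 0, and cd + 1 = (Y/W)^k. -/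
/-! With `x = (X/Z)^k`, `y = (Y/Z)^k` and `t = lam^k`, the hypotheses say exactly that
`t^2 = (W/Z)^k` and `x + y = 1 + t^2`; all six identities are then rational-function
identities in `x, y, t` modulo this one relation. -/

theorem mul_add_one_identities_of_add_eq_one_add_sq {K : Type*} [Field K] {x y t : K}
    (ht : t ≠ 0) (h : x + y = 1 + t ^ 2) :
    (x - t ^ 2) / t * -t + 1 = y ∧
    (x - t ^ 2) / t * ((y - t ^ 2) / t) + 1 = x * y / t ^ 2 ∧
    (x - t ^ 2) / t * t⁻¹ + 1 = x / t ^ 2 ∧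
    -t * ((y - t ^ 2) / t) + 1 = x ∧
    -t * t⁻¹ + 1 = 0 ∧
    (y - t ^ 2) / t * t⁻¹ + 1 = y / t ^ 2 := by
  obtain rfl : y = 1 + t ^ 2 - x := by linear_combination h
  refine ⟨?_, ?_, ?_, ?_, ?_, ?_⟩ <;> field_simp <;> ring

theorem fermat_euler_odd_identities_general
    (k : ℕ) (X Y Z W : ℚ) (hE : X ^ k + Y ^ k = Z ^ k + W ^ k) (hZW : Z * W ≠ 0)
    (lam : ℚ) (hlam : lam ≠ 0) (hsq : W / Z = lam ^ 2)
    (a b c d : ℚ)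
    (ha : a = (X ^ k - W ^ k) / (lam ^ k * Z ^ k))
    (hb : b = -lam ^ k)
    (hc : c = (Y ^ k - W ^ k) / (lam ^ k * Z ^ k))
    (hd : d = (lam ^ k)⁻¹) :
    a * b + 1 = (Y / Z) ^ k ∧
    a * c + 1 = (X * Y / (Z * W)) ^ k ∧
    a * d + 1 = (X / W) ^ k ∧
    b * c + 1 = (X / Z) ^ k ∧
    b * d + 1 = 0 ∧
    c * d + 1 = (Y / W) ^ k := by
  obtain ⟨hZ, hW⟩ := mul_ne_zero_iff.mp hZW
  have hWZ : (W / Z) ^ k = (lam ^ k) ^ 2 := by rw [hsq, ← pow_mul, ← pow_mul, mul_comm]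
  have hrel : (X / Z) ^ k + (Y / Z) ^ k = 1 + (lam ^ k) ^ 2 := by
    rw [← hWZ, div_pow, div_pow, div_pow]
    field_simp
    exact hE
  have hnorm (U : ℚ) : (U ^ k - W ^ k) / (lam ^ k * Z ^ k) =
      ((U / Z) ^ k - (lam ^ k) ^ 2) / lam ^ k := by
    rw [← hWZ, div_pow, div_pow]
    field_simp
  have hoverW (U : ℚ) : (U / W) ^ k = (U / Z) ^ k / (lam ^ k) ^ 2 := by
    rw [← hWZ, ← div_pow, div_div_div_cancel_right₀ hZ]
  have hXYZW : (X * Y / (Z * W)) ^ k = (X / Z) ^ k * (Y / Z) ^ k / (lam ^ k) ^ 2 := by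
    rw [mul_div_assoc ((X / Z) ^ k), ← hoverW, ← mul_pow, div_mul_div_comm]
  rw [ha, hb, hc, hd, hnorm, hnorm, hXYZW, hoverW, hoverW]
  exact mul_add_one_identities_of_add_eq_one_add_sq (pow_ne_zero k hlam) hrel

theorem fermat_euler_odd_identities
    (k : ℕ) (hk : 3 ≤ k) (hodd : Odd k)
    (X Y Z W : ℚ) (hE : X ^ k + Y ^ k = Z ^ k + W ^ k) (hZW : Z * W ≠ 0)
    (lam : ℚ) (hlam : lam ≠ 0) (hsq : W / Z = lam ^ 2)
    (a b c d : ℚ)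
    (ha : a = (X ^ k - W ^ k) / (lam ^ k * Z ^ k))
    (hb : b = -lam ^ k)
    (hc : c = (Y ^ k - W ^ k) / (lam ^ k * Z ^ k))
    (hd : d = (lam ^ k)⁻¹) :
    a * b + 1 = (Y / Z) ^ k ∧
    a * c + 1 = (X * Y / (Z * W)) ^ k ∧
    a * d + 1 = (X / W) ^ k ∧
    b * c + 1 = (X / Z) ^ k ∧
    b * d + 1 = 0 ∧
    c * d + 1 = (Y / W) ^ k :=
  fermat_euler_odd_identities_general k X Y Z W hE hZW lam hlam hsq a b c d ha hb hc hd
end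

section
/- Let k be an odd integer with k ≥ 3, and let X, Y, Z, W be rational numbers with X^k + Y^k = Z^k + W^k, ZW ≠ 0, W/Z = λ^2 for some nonzero rational λ, and XYZW·(X^k − Y^k)·(X^k − W^k)·(Y^k − W^k) ≠ 0. Then the numbers a = (X^k − W^k)/(λ^k Z^k), b = −λ^k, c = (Y^k − W^k)/(λ^k Z^k), d = λ^{−k} are pairwise distinct and nonzero, and each of ab+1, ac+1, ad+1, bc+1, bd+1, cd+1 is a kth power of a rational number; hence they form a kth power rational Diophantine quadruple. -/
/-!
With `x = (X/Z)^k`, `y = (Y/Z)^k` and `m = λ^k`, the condition `W = λ^2 Z` turns the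
Fermat–Euler relation into `x + y = 1 + m^2`, and the quadruple becomes
`((x - m^2)/m, -m, (y - m^2)/m, 1/m)`. For any such `x, y, m` the six numbers
`ab+1, ac+1, ad+1, bc+1, bd+1, cd+1` are
`y, xy/m^2, x/m^2, x, 0, y/m^2`, which here are the `k`th powers of
`Y/Z, XY/(ZW), X/W, X/Z, 0, Y/W`.
-/

section

variable {F : Type*} [Field F] {x y m a b c d : F}

theorem mul_add_one_eq_of_add_eq_one_add_sq (hm : m ≠ 0) (hsum : x + y = 1 + m ^ 2)
    (ha : a = (x - m ^ 2) / m) (hb : b = -m) (hc : c = (y - m ^ 2) / m) (hd : d = m⁻¹) :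
    a * b + 1 = y ∧ a * c + 1 = x * y / m ^ 2 ∧ a * d + 1 = x / m ^ 2 ∧
      b * c + 1 = x ∧ b * d + 1 = 0 ∧ c * d + 1 = y / m ^ 2 := by
  subst ha hb hc hd
  refine ⟨?_, ?_, ?_, ?_, ?_, ?_⟩ <;> field_simp
  · linear_combination -hsum
  · linear_combination -m ^ 2 * hsum
  · ring
  · linear_combination -hsum
  · ring
  · ring

theorem pairwise_ne_and_ne_zero_of_add_eq_one_add_sq [LinearOrder F] [IsStrictOrderedRing F]
    (hm : m ≠ 0) (hsum : x + y = 1 + m ^ 2)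
    (hx : x ≠ 0) (hy : y ≠ 0) (hxy : x ≠ y) (hxm : x ≠ m ^ 2) (hym : y ≠ m ^ 2)
    (ha : a = (x - m ^ 2) / m) (hb : b = -m) (hc : c = (y - m ^ 2) / m) (hd : d = m⁻¹) :
    (a ≠ b ∧ a ≠ c ∧ a ≠ d ∧ b ≠ c ∧ b ≠ d ∧ c ≠ d) ∧
    (a ≠ 0 ∧ b ≠ 0 ∧ c ≠ 0 ∧ d ≠ 0) := by
  subst ha hb hc hd
  refine ⟨⟨?_, ?_, ?_, ?_, ?_, ?_⟩, ?_, neg_ne_zero.2 hm, ?_, inv_ne_zero hm⟩ <;> intro h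
  · exact hx (by field_simp at h; linear_combination h)
  · exact hxy (by field_simp at h; linear_combination h)
  · exact hy (by field_simp at h; linear_combination hsum - h)
  · exact hy (by field_simp at h; linear_combination -h)
  · field_simp at h; nlinarith [sq_nonneg m]
  · exact hx (by field_simp at h; linear_combination hsum - h)
  · exact hxm (by field_simp at h; linear_combination h)
  · exact hym (by field_simp at h; linear_combination h)

end

theorem fermat_euler_odd_quadruple_general
    (k : ℕ) (hk : 3 ≤ k)
    (X Y Z W : ℚ) (hE : X ^ k + Y ^ k = Z ^ k + W ^ k)
    (lam : ℚ) (hsq : W / Z = lam ^ 2)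
    (hnd : X * Y * Z * W * (X ^ k - Y ^ k) * (X ^ k - W ^ k) * (Y ^ k - W ^ k) ≠ 0)
    (a b c d : ℚ)
    (ha : a = (X ^ k - W ^ k) / (lam ^ k * Z ^ k))
    (hb : b = -lam ^ k)
    (hc : c = (Y ^ k - W ^ k) / (lam ^ k * Z ^ k))
    (hd : d = (lam ^ k)⁻¹) :
    (a ≠ b ∧ a ≠ c ∧ a ≠ d ∧ b ≠ c ∧ b ≠ d ∧ c ≠ d) ∧
    (a ≠ 0 ∧ b ≠ 0 ∧ c ≠ 0 ∧ d ≠ 0) ∧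
    (∃ q : ℚ, a * b + 1 = q ^ k) ∧
    (∃ q : ℚ, a * c + 1 = q ^ k) ∧
    (∃ q : ℚ, a * d + 1 = q ^ k) ∧
    (∃ q : ℚ, b * c + 1 = q ^ k) ∧
    (∃ q : ℚ, b * d + 1 = q ^ k) ∧
    (∃ q : ℚ, c * d + 1 = q ^ k) := by
  simp only [mul_ne_zero_iff, sub_ne_zero] at hnd
  obtain ⟨⟨⟨⟨⟨⟨hX, hY⟩, hZ⟩, hW⟩, hXY⟩, hXW⟩, hYW⟩ := hnd
  have hlam : lam ≠ 0 := by rintro rfl; simp [hZ, hW] at hsq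
  have hZk : Z ^ k ≠ 0 := pow_ne_zero k hZ
  have hlamk : lam ^ k ≠ 0 := pow_ne_zero k hlam
  have hm : (lam ^ k) ^ 2 = W ^ k / Z ^ k := by rw [← div_pow, hsq, pow_right_comm]
  have hsum : X ^ k / Z ^ k + Y ^ k / Z ^ k = 1 + (lam ^ k) ^ 2 := by
    rw [hm, ← add_div, hE, add_div, div_self hZk]
  have hnorm (V : ℚ) :
      (V ^ k - W ^ k) / (lam ^ k * Z ^ k) = (V ^ k / Z ^ k - (lam ^ k) ^ 2) / lam ^ k := by
    rw [hm, ← sub_div, div_div, mul_comm]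
  rw [hnorm] at ha hc
  have hdiv_ne {U V : ℚ} (h : U ≠ V) : U / Z ^ k ≠ V / Z ^ k := (div_left_inj' hZk).not.2 h
  obtain ⟨hab, hac, had, hbc, hbd, hcd⟩ :=
    mul_add_one_eq_of_add_eq_one_add_sq hlamk hsum ha hb hc hd
  obtain ⟨hne, hne_zero⟩ := pairwise_ne_and_ne_zero_of_add_eq_one_add_sq hlamk hsum
    (div_ne_zero (pow_ne_zero k hX) hZk) (div_ne_zero (pow_ne_zero k hY) hZk)
    (hdiv_ne hXY) (hm ▸ hdiv_ne hXW) (hm ▸ hdiv_ne hYW) ha hb hc hd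
  refine ⟨hne, hne_zero, ⟨Y / Z, ?_⟩, ⟨X * Y / (Z * W), ?_⟩, ⟨X / W, ?_⟩, ⟨X / Z, ?_⟩,
    ⟨0, ?_⟩, ⟨Y / W, ?_⟩⟩
  · rw [hab, div_pow]
  · rw [hac, hm, div_pow, mul_pow, mul_pow]; field_simp
  · rw [had, hm, div_pow]; field_simp
  · rw [hbc, div_pow]
  · rw [hbd, zero_pow (by omega)]
  · rw [hcd, hm, div_pow]; field_simp

theorem fermat_euler_odd_quadruple
    (k : ℕ) (hk : 3 ≤ k) (hodd : Odd k)
    (X Y Z W : ℚ) (hE : X ^ k + Y ^ k = Z ^ k + W ^ k) (hZW : Z * W ≠ 0)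
    (lam : ℚ) (hlam : lam ≠ 0) (hsq : W / Z = lam ^ 2)
    (hnd : X * Y * Z * W * (X ^ k - Y ^ k) * (X ^ k - W ^ k) * (Y ^ k - W ^ k) ≠ 0)
    (a b c d : ℚ)
    (ha : a = (X ^ k - W ^ k) / (lam ^ k * Z ^ k))
    (hb : b = -lam ^ k)
    (hc : c = (Y ^ k - W ^ k) / (lam ^ k * Z ^ k))
    (hd : d = (lam ^ k)⁻¹) :
    (a ≠ b ∧ a ≠ c ∧ a ≠ d ∧ b ≠ c ∧ b ≠ d ∧ c ≠ d) ∧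
    (a ≠ 0 ∧ b ≠ 0 ∧ c ≠ 0 ∧ d ≠ 0) ∧
    (∃ q : ℚ, a * b + 1 = q ^ k) ∧
    (∃ q : ℚ, a * c + 1 = q ^ k) ∧
    (∃ q : ℚ, a * d + 1 = q ^ k) ∧
    (∃ q : ℚ, b * c + 1 = q ^ k) ∧
    (∃ q : ℚ, b * d + 1 = q ^ k) ∧
    (∃ q : ℚ, c * d + 1 = q ^ k) :=
  fermat_euler_odd_quadruple_general k hk X Y Z W hE lam hsq hnd a b c d ha hb hc hd
end

section
/- Let k ≥ 2 be an integer and let κ, u, w be nonzero rational numbers. Set r = κw, t = κu, s = κuw, v = 0. Then: (i) the expression (r^k − 1)(w^k − 1) − (t^k − 1)(u^k − 1) equals (w^k − u^k)·(κ^k(u^k + w^k) − (κ^k + 1)), so away from the locus u^k = w^k the condition (r^k − 1)(w^k − 1) = (t^k − 1)(u^k − 1) is equivalent to u^k + w^k = 1 + 1/κ^k; (ii) the condition (r^k − 1)(w^k − 1) = (s^k − 1)(v^k − 1) is equivalent to u^k + w^k = 1 + 1/κ^k; and (iii) if u^k + w^k = 1 + 1/κ^k, then (r^k − 1)(u^k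 − 1)(v^k − 1) = (r^k − 1)^2/κ^k. -/
theorem general_special_locus
    (k : ℕ) (hk : 2 ≤ k)
    (κ u w : ℚ) (hκ : κ ≠ 0) (hu : u ≠ 0) (hw : w ≠ 0)
    (r t s v : ℚ) (hr : r = κ * w) (ht : t = κ * u) (hs : s = κ * u * w)
    (hv : v = 0) :
    ((r ^ k - 1) * (w ^ k - 1) - (t ^ k - 1) * (u ^ k - 1) =
        (w ^ k - u ^ k) * (κ ^ k * (u ^ k + w ^ k) - (κ ^ k + 1))) ∧
    (u ^ k ≠ w ^ k →
      ((r ^ k - 1) * (w ^ k - 1) = (t ^ k - 1) * (u ^ k - 1) ↔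
        u ^ k + w ^ k = 1 + 1 / κ ^ k)) ∧
    ((r ^ k - 1) * (w ^ k - 1) = (s ^ k - 1) * (v ^ k - 1) ↔
      u ^ k + w ^ k = 1 + 1 / κ ^ k) ∧
    (u ^ k + w ^ k = 1 + 1 / κ ^ k →
      (r ^ k - 1) * (u ^ k - 1) * (v ^ k - 1) = (r ^ k - 1) ^ 2 / κ ^ k) := by
  subst hr ht hs hv
  have hk0 : k ≠ 0 := by omega
  have hK : κ ^ k ≠ 0 := pow_ne_zero _ hκ
  have hU : u ^ k ≠ 0 := pow_ne_zero _ hu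
  have hW : w ^ k ≠ 0 := pow_ne_zero _ hw
  simp only [mul_pow, zero_pow hk0]
  set K := κ ^ k with hKdef
  set U := u ^ k with hUdef
  set W := w ^ k with hWdef
  refine ⟨by ring, ?_, ?_, ?_⟩
  · intro hne
    constructor
    · intro h
      have h1 : (W - U) * (K * (U + W) - (K + 1)) = 0 := by linarith [h]
      have h2 : K * (U + W) - (K + 1) = 0 := by
        rcases mul_eq_zero.mp h1 with h' | h'
        · exact absurd (by linarith) hne
        · exact h'
      field_simp
      linarith
    · intro h
      have h2 : K * (U + W) = K + 1 := by
        field_simp at h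
        linarith
      linear_combination (W - U) * h2
  · constructor
    · intro h
      have h1 : W * (K * (U + W) - (K + 1)) = 0 := by ring_nf; ring_nf at h; linarith
      have h2 : K * (U + W) - (K + 1) = 0 := by
        rcases mul_eq_zero.mp h1 with h' | h'
        · exact absurd h' hW
        · exact h'
      field_simp
      linarith
    · intro h
      have h2 : K * (U + W) = K + 1 := by
        field_simp at h
        linarith
      linear_combination W * h2
  · intro h
    have h2 : K * (U + W) = K + 1 := by
      field_simp at h
      linarith
    have hU1 : U - 1 = (1 - K * W) / K := by
      field_simp
      linarith
    rw [hU1]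
    field_simp
    ring
end
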